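/- Let H be a real Hilbert space, E : H → ℝ Fréchet differentiable, and ξ : [0,∞) → H differentiable with ξ'(t) = −∇E(ξ(t)) for all t ≥ 0. Let γ∞ ∈ H, Z > 0, δ ∈ (0,1], and suppose the Łojasiewicz–Simon inequality holds with exponent θ = 1/2: ‖∇E(η)‖ ≥ Z (E(η) − E(γ∞))^{1/2} for all η with ‖η − γ∞‖ < δ. Assume that for all t ≥ 0 one has ‖ξ(t) − γ∞‖ < δ and E(ξ(t)) ≥ E(γ∞), and that ξ(t) → γ∞ as t → ∞. Then for all t ≥ 0: E(ξ(t)) − E(γ∞) ≤ (E(ξ(0)) − E(γ∞)) e^{−Z² t} and ‖ξ(t) − γ∞‖ ≤ (2/Z) (E(ξ(0)) − E(γ∞))^{1/2} e^{−Z² t/2}. -/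

import Mathlib

/-!
Along the flow the energy gap `f(t) = E(ξ t) - E γ∞` satisfies `f' = -‖∇E‖² ≤ -Z² f` by the
Łojasiewicz–Simon inequality, so Grönwall gives `f(t) ≤ f(0) e^{-Z² t}`. For the distance, the
inequality also gives `(2/Z) (√f)' = -‖∇E‖² / (Z √f) ≤ -‖ξ'‖`: the length of the trajectory after
time `t` is at most `(2/Z) √(f t)`, and so is the distance from `ξ t` to the limit `γ∞`.
-/

open Filter Set Topology

theorem le_mul_exp_of_hasDerivAt_le_neg_mul {f f' : ℝ → ℝ} {c : ℝ}
    (hf : ∀ s, 0 ≤ s → HasDerivAt f (f' s) s) (hbound : ∀ s, 0 ≤ s → f' s ≤ -c * f s)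
    {t : ℝ} (ht : 0 ≤ t) : f t ≤ f 0 * Real.exp (-c * t) := by
  have := le_gronwallBound_of_liminf_deriv_right_le (f' := f') (K := -c) (ε := 0) (b := t)
    (fun s hs => (hf s hs.1).continuousAt.continuousWithinAt)
    (fun s hs _ hr => (hf s hs.1).hasDerivWithinAt.liminf_right_slope_le hr) le_rfl
    (fun s hs => by simpa using hbound s hs.1) t ⟨ht, le_rfl⟩
  simpa [gronwallBound_ε0] using this

theorem HasDerivWithinAt.eq_zero_of_forall_Ici_eq {f : ℝ → ℝ} {f' u : ℝ}
    (hf : HasDerivWithinAt f f' (Ici u) u) (hconst : ∀ w ∈ Ici u, f w = f u) : f' = 0 :=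
  (uniqueDiffWithinAt_Ici u).eq_deriv _ hf ((hasDerivWithinAt_const u _ (f u)).congr hconst rfl)

theorem HasDerivWithinAt.sqrt_of_forall_Ici_le {f : ℝ → ℝ} {f' u : ℝ}
    (hf : HasDerivWithinAt f f' (Ici u) u) (hle : ∀ w ∈ Ici u, 0 ≤ f w ∧ f w ≤ f u) :
    HasDerivWithinAt (fun w => √(f w)) (f' / (2 * √(f u))) (Ici u) u := by
  rcases (hle u self_mem_Ici).1.eq_or_lt with hzero | hpos
  · -- `f` vanishes on `[u, ∞)`, and the claimed derivative is `f' / 0 = 0`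
    have hsqrt : ∀ w ∈ Ici u, √(f w) = 0 := fun w hw =>
      Real.sqrt_eq_zero'.2 (hzero ▸ (hle w hw).2)
    rw [← hzero, Real.sqrt_zero, mul_zero, div_zero]
    exact (hasDerivWithinAt_const u (Ici u) (0 : ℝ)).congr hsqrt (hsqrt u self_mem_Ici)
  · exact hf.sqrt hpos.ne'

theorem norm_sub_le_of_norm_deriv_right_le_neg_deriv {F : Type*} [NormedAddCommGroup F]
    [NormedSpace ℝ F] {γ γ' : ℝ → F} {φ φ' : ℝ → ℝ} {a b : ℝ} (hab : a ≤ b)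
    (hγ : ContinuousOn γ (Icc a b)) (hγ' : ∀ x ∈ Ico a b, HasDerivWithinAt γ (γ' x) (Ici x) x)
    (hφ : ContinuousOn φ (Icc a b)) (hφ' : ∀ x ∈ Ico a b, HasDerivWithinAt φ (φ' x) (Ici x) x)
    (bound : ∀ x ∈ Ico a b, ‖γ' x‖ ≤ -φ' x) : ‖γ b - γ a‖ ≤ φ a - φ b :=
  image_norm_le_of_norm_deriv_right_le_deriv_boundary' (f := fun x => γ x - γ a)
    (B := fun x => φ a - φ x) (hγ.sub continuousOn_const) (fun x hx => (hγ' x hx).sub_const _)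
    (by simp) (continuousOn_const.sub hφ) (fun x hx => (hφ' x hx).const_sub _) bound
    ⟨hab, le_rfl⟩

theorem le_sq_div_of_le {c g : ℝ} (hc : 0 ≤ c) (hcg : c ≤ g) (hzero : c = 0 → g = 0) :
    g ≤ g ^ 2 / c := by
  rcases hc.eq_or_lt with rfl | hc
  · simp [hzero rfl]
  · rw [le_div_iff₀ hc]
    nlinarith

theorem hasDerivAt_comp_of_hasDerivAt_neg_gradient {H : Type*} [NormedAddCommGroup H]
    [InnerProductSpace ℝ H] [CompleteSpace H] {E : H → ℝ} {ξ : ℝ → H} {t : ℝ}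
    (hE : DifferentiableAt ℝ E (ξ t)) (hξ : HasDerivAt ξ (-gradient E (ξ t)) t) :
    HasDerivAt (fun s => E (ξ s)) (-‖gradient E (ξ t)‖ ^ 2) t := by
  have := (hasGradientAt_iff_hasFDerivAt.1 hE.hasGradientAt).comp_hasDerivAt t hξ
  rwa [InnerProductSpace.toDual_apply_apply, inner_neg_right, real_inner_self_eq_norm_sq] at this

section Lojasiewicz

variable {H : Type*} [NormedAddCommGroup H] {ξ v : ℝ → H} {f : ℝ → ℝ} {Z : ℝ}

theorem antitoneOn_of_hasDerivAt_neg_norm_sq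
    (hf : ∀ s, 0 ≤ s → HasDerivAt f (-‖v s‖ ^ 2) s) : AntitoneOn f (Ici 0) := by
  refine antitoneOn_of_hasDerivWithinAt_nonpos (f' := fun s => -‖v s‖ ^ 2) (convex_Ici 0)
    (fun s hs => (hf s hs).continuousAt.continuousWithinAt) (fun s hs => ?_) (fun s _ => ?_)
  · rw [interior_Ici] at hs
    exact (hf s hs.le).hasDerivWithinAt
  · exact neg_nonpos.2 (sq_nonneg _)

theorem le_mul_exp_of_lojasiewicz (hZ : 0 ≤ Z)
    (hf : ∀ s, 0 ≤ s → HasDerivAt f (-‖v s‖ ^ 2) s) (hf0 : ∀ s, 0 ≤ s → 0 ≤ f s)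
    (hLS : ∀ s, 0 ≤ s → Z * √(f s) ≤ ‖v s‖) {t : ℝ} (ht : 0 ≤ t) :
    f t ≤ f 0 * Real.exp (-Z ^ 2 * t) := by
  refine le_mul_exp_of_hasDerivAt_le_neg_mul hf (fun s hs => ?_) ht
  have hsq : (Z * √(f s)) ^ 2 ≤ ‖v s‖ ^ 2 := pow_le_pow_left₀ (by positivity) (hLS s hs) 2
  rw [mul_pow, Real.sq_sqrt (hf0 s hs)] at hsq
  linarith

theorem norm_sub_le_of_lojasiewicz [NormedSpace ℝ H] (hZ : 0 < Z)
    (hξ : ∀ s, 0 ≤ s → HasDerivAt ξ (v s) s)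
    (hf : ∀ s, 0 ≤ s → HasDerivAt f (-‖v s‖ ^ 2) s) (hf0 : ∀ s, 0 ≤ s → 0 ≤ f s)
    (hLS : ∀ s, 0 ≤ s → Z * √(f s) ≤ ‖v s‖) {t s : ℝ} (ht : 0 ≤ t) (hts : t ≤ s) :
    ‖ξ s - ξ t‖ ≤ 2 / Z * √(f t) - 2 / Z * √(f s) := by
  have hanti := antitoneOn_of_hasDerivAt_neg_norm_sq hf
  have hle : ∀ u, 0 ≤ u → ∀ w ∈ Ici u, 0 ≤ f w ∧ f w ≤ f u := fun u hu w hw =>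
    ⟨hf0 w (hu.trans hw), hanti hu (hu.trans hw) hw⟩
  refine norm_sub_le_of_norm_deriv_right_le_neg_deriv (γ' := v) (φ := fun u => 2 / Z * √(f u))
    (φ' := fun u => 2 / Z * (-‖v u‖ ^ 2 / (2 * √(f u)))) hts
    (fun u hu => (hξ u (ht.trans hu.1)).continuousAt.continuousWithinAt) (fun u hu => ?_)
    (fun u hu => ?_) (fun u hu => ?_) (fun u hu => ?_)
  · exact (hξ u (ht.trans hu.1)).hasDerivWithinAt
  · exact ((hf u (ht.trans hu.1)).continuousAt.sqrt.const_mul _).continuousWithinAt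
  · exact ((hf u (ht.trans hu.1)).hasDerivWithinAt.sqrt_of_forall_Ici_le
      (hle u (ht.trans hu.1))).const_mul _
  have hu : 0 ≤ u := ht.trans hu.1
  -- where the energy gap vanishes it stays zero, so the velocity vanishes too
  have hzero : Z * √(f u) = 0 → ‖v u‖ = 0 := fun h => by
    have hfu : f u = 0 :=
      le_antisymm (Real.sqrt_eq_zero'.1 ((mul_eq_zero.1 h).resolve_left hZ.ne')) (hf0 u hu)
    have := (hf u hu).hasDerivWithinAt.eq_zero_of_forall_Ici_eq fun w hw => by
      linarith [hle u hu w hw]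
    simpa using this
  calc ‖v u‖ ≤ ‖v u‖ ^ 2 / (Z * √(f u)) :=
        le_sq_div_of_le (by positivity) (hLS u hu) hzero
    _ = -(2 / Z * (-‖v u‖ ^ 2 / (2 * √(f u)))) := by field_simp

theorem norm_sub_limit_le_of_lojasiewicz [NormedSpace ℝ H] (hZ : 0 < Z)
    (hξ : ∀ s, 0 ≤ s → HasDerivAt ξ (v s) s)
    (hf : ∀ s, 0 ≤ s → HasDerivAt f (-‖v s‖ ^ 2) s) (hf0 : ∀ s, 0 ≤ s → 0 ≤ f s)
    (hLS : ∀ s, 0 ≤ s → Z * √(f s) ≤ ‖v s‖) {γ : H} (hconv : Tendsto ξ atTop (𝓝 γ))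
    {t : ℝ} (ht : 0 ≤ t) : ‖ξ t - γ‖ ≤ 2 / Z * √(f t) := by
  rw [norm_sub_rev]
  refine le_of_tendsto ((hconv.sub_const (ξ t)).norm) ?_
  filter_upwards [eventually_ge_atTop t] with s hts
  have : 0 ≤ 2 / Z * √(f s) := by positivity
  linarith [norm_sub_le_of_lojasiewicz hZ hξ hf hf0 hLS ht hts]

end Lojasiewicz

theorem stmt14_general {H : Type*} [NormedAddCommGroup H] [InnerProductSpace ℝ H]
    [CompleteSpace H]
    (E : H → ℝ) (hE : Differentiable ℝ E)
    (ξ : ℝ → H) (hξ : ∀ t : ℝ, 0 ≤ t → HasDerivAt ξ (-(gradient E (ξ t))) t)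
    (γlim : H) (Z δ : ℝ) (hZ : 0 < Z)
    (hLS : ∀ η : H, ‖η - γlim‖ < δ →
      Z * (E η - E γlim) ^ ((1:ℝ)/2) ≤ ‖gradient E η‖)
    (hstay : ∀ t : ℝ, 0 ≤ t → ‖ξ t - γlim‖ < δ ∧ E γlim ≤ E (ξ t))
    (hconv : Tendsto ξ atTop (nhds γlim)) :
    ∀ t : ℝ, 0 ≤ t →
      E (ξ t) - E γlim ≤ (E (ξ 0) - E γlim) * Real.exp (-(Z ^ 2) * t)
      ∧ ‖ξ t - γlim‖
          ≤ 2 / Z * (E (ξ 0) - E γlim) ^ ((1:ℝ)/2) * Real.exp (-(Z ^ 2) * t / 2) := by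
  set f : ℝ → ℝ := fun s => E (ξ s) - E γlim
  have hf : ∀ s, 0 ≤ s → HasDerivAt f (-‖-gradient E (ξ s)‖ ^ 2) s := fun s hs => by
    simpa only [norm_neg] using
      (hasDerivAt_comp_of_hasDerivAt_neg_gradient (hE (ξ s)) (hξ s hs)).sub_const (E γlim)
  have hf0 : ∀ s, 0 ≤ s → 0 ≤ f s := fun s hs => sub_nonneg.2 (hstay s hs).2
  have hLS' : ∀ s, 0 ≤ s → Z * √(f s) ≤ ‖-gradient E (ξ s)‖ := fun s hs => by
    simpa only [norm_neg, Real.sqrt_eq_rpow] using hLS (ξ s) (hstay s hs).1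
  intro t ht
  have henergy : f t ≤ f 0 * Real.exp (-Z ^ 2 * t) :=
    le_mul_exp_of_lojasiewicz hZ.le hf hf0 hLS' ht
  refine ⟨henergy, ?_⟩
  calc ‖ξ t - γlim‖ ≤ 2 / Z * √(f t) :=
        norm_sub_limit_le_of_lojasiewicz hZ hξ hf hf0 hLS' hconv ht
    _ ≤ 2 / Z * √(f 0 * Real.exp (-Z ^ 2 * t)) := by gcongr
    _ = 2 / Z * (E (ξ 0) - E γlim) ^ ((1:ℝ)/2) * Real.exp (-(Z ^ 2) * t / 2) := by
      rw [Real.sqrt_mul (hf0 0 le_rfl), ← Real.exp_half, Real.sqrt_eq_rpow, neg_mul, mul_assoc]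

/-- Exponential convergence rate for the gradient flow when the
Łojasiewicz–Simon inequality holds with exponent `θ = 1/2`:
`E(ξ(t)) − E(γ∞) ≤ (E(ξ(0)) − E(γ∞)) e^{−Z²t}` and
`‖ξ(t) − γ∞‖ ≤ (2/Z)(E(ξ(0)) − E(γ∞))^{1/2} e^{−Z²t/2}`. -/
theorem stmt14 {H : Type*} [NormedAddCommGroup H] [InnerProductSpace ℝ H]
    [CompleteSpace H]
    (E : H → ℝ) (hE : Differentiable ℝ E)
    (ξ : ℝ → H) (hξ : ∀ t : ℝ, 0 ≤ t → HasDerivAt ξ (-(gradient E (ξ t))) t)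
    (γlim : H) (Z δ : ℝ) (hZ : 0 < Z) (hδ : δ ∈ Set.Ioc (0:ℝ) 1)
    (hLS : ∀ η : H, ‖η - γlim‖ < δ →
      Z * (E η - E γlim) ^ ((1:ℝ)/2) ≤ ‖gradient E η‖)
    (hstay : ∀ t : ℝ, 0 ≤ t → ‖ξ t - γlim‖ < δ ∧ E γlim ≤ E (ξ t))
    (hconv : Tendsto ξ atTop (nhds γlim)) :
    ∀ t : ℝ, 0 ≤ t →
      E (ξ t) - E γlim ≤ (E (ξ 0) - E γlim) * Real.exp (-(Z ^ 2) * t)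
      ∧ ‖ξ t - γlim‖
          ≤ 2 / Z * (E (ξ 0) - E γlim) ^ ((1:ℝ)/2) * Real.exp (-(Z ^ 2) * t / 2) :=
  stmt14_general E hE ξ hξ γlim Z δ hZ hLS hstay hconv
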